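/- arXiv:2004.03899 — 3 statements merged into one kernel-verified Lean document; each statement's English description precedes it below -/
import Mathlib

section
/- Let N ≥ 3 and let K(x,y) = |x|^{−(N−2)} P(x/|x|², y) be the Kelvin transform of the Poisson kernel P of the unit ball, for |x| > 1 and |y| = 1. Then |x·∇_x K(x,y)| ≤ N · (|x|/(|x|−1)) · K(x,y). -/
/-!
Inversion in the unit sphere fixes `y` and scales distances, so `K x = c (r² - 1) / ‖x - y‖ ^ N`
with `r = ‖x‖`. Then `x · ∇K = K (2r² / (r² - 1) - N (r² - ⟪x, y⟫) / ‖x - y‖²)`, and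
`r² - ⟪x, y⟫ = (‖x - y‖² + r² - 1) / 2` splits the second term as
`N / 2 + N (r² - 1) / (2 ‖x - y‖²)`, which the reverse triangle inequality `‖x - y‖ ≥ r - 1`
bounds by `N r / (r - 1)`. The first term lies in the same range `[0, N r / (r - 1)]` as soon as
`N ≥ 2`, hence so does the absolute value of their difference.
-/

open RealInnerProductSpace

section

variable {E : Type*} [NormedAddCommGroup E] [InnerProductSpace ℝ E]

theorem norm_inv_norm_sq_smul_sub {x y : E} (hx : x ≠ 0) (hy : ‖y‖ = 1) :
    ‖(‖x‖ ^ 2)⁻¹ • x - y‖ = ‖x - y‖ / ‖x‖ := by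
  have h := dist_div_norm_sq_smul hx (norm_ne_zero_iff.mp (hy ▸ one_ne_zero)) 1
  simpa [hy, dist_eq_norm, div_eq_inv_mul] using h

theorem Real.sq_rpow_neg_div_two {d : ℝ} (hd : 0 ≤ d) (n : ℕ) :
    (d ^ 2) ^ (-(n : ℝ) / 2) = (d ^ n)⁻¹ := by
  rw [← Real.rpow_natCast d 2, ← Real.rpow_mul hd, Nat.cast_ofNat,
    mul_div_cancel₀ _ two_ne_zero, Real.rpow_neg hd, Real.rpow_natCast]

noncomputable def kelvinPoisson (N : ℕ) (c : ℝ) (y : E) (x : E) : ℝ :=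
  c * (‖x‖ ^ 2 - 1) / ‖x - y‖ ^ N

theorem kelvinTransform_poissonKernel_eq {N : ℕ} (hN : 2 ≤ N) (c : ℝ) {x y : E} (hx : x ≠ 0)
    (hy : ‖y‖ = 1) :
    (‖x‖ ^ (N - 2))⁻¹ * (c * (1 - ‖(‖x‖ ^ 2)⁻¹ • x‖ ^ 2) / ‖(‖x‖ ^ 2)⁻¹ • x - y‖ ^ N) =
      kelvinPoisson N c y x := by
  have hr : ‖x‖ ≠ 0 := norm_ne_zero_iff.mpr hx
  obtain ⟨M, rfl⟩ : ∃ M, N = M + 2 := ⟨N - 2, by omega⟩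
  rw [norm_inv_norm_sq_smul_sub hx hy, norm_smul, norm_inv, norm_pow, norm_norm,
    Nat.add_sub_cancel, kelvinPoisson, div_pow]
  field_simp
  ring

theorem fderiv_kelvinPoisson_apply_self (N : ℕ) (c : ℝ) {x y : E} (hxy : x ≠ y) :
    fderiv ℝ (kelvinPoisson N c y) x x =
      c * (2 * ‖x‖ ^ 2 - N * (‖x‖ ^ 2 - 1) * ⟪x - y, x⟫ / ‖x - y‖ ^ 2) / ‖x - y‖ ^ N := by
  have hd : 0 < ‖x - y‖ := norm_pos_iff.mpr (sub_ne_zero.mpr hxy)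
  -- `‖z - y‖ ^ 2` is smooth everywhere, unlike `‖z - y‖`
  have hrpow :
      kelvinPoisson N c y = fun z ↦ c * ((‖z‖ ^ 2 - 1) * (‖z - y‖ ^ 2) ^ (-(N : ℝ) / 2)) := by
    ext z
    rw [kelvinPoisson, Real.sq_rpow_neg_div_two (norm_nonneg _), div_eq_mul_inv, mul_assoc]
  have hA : HasFDerivAt (fun z : E ↦ ‖z‖ ^ 2 - 1) (2 • innerSL ℝ x) x := by
    simpa using (hasFDerivAt_id x).norm_sq.sub_const (1 : ℝ)
  have hB : HasFDerivAt (fun z : E ↦ ‖z - y‖ ^ 2) (2 • innerSL ℝ (x - y)) x := by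
    simpa using ((hasFDerivAt_id x).sub_const y).norm_sq
  rw [hrpow, ((hA.fun_mul (hB.rpow_const (Or.inl (by positivity)))).const_mul c).fderiv]
  simp only [add_apply, smul_apply, innerSL_apply_apply, smul_eq_mul, real_inner_self_eq_norm_sq]
  have hexp : (-(N : ℝ) / 2 - 1) = -((N + 2 : ℕ) : ℝ) / 2 := by push_cast; ring
  rw [hexp, Real.sq_rpow_neg_div_two hd.le, Real.sq_rpow_neg_div_two hd.le]
  field_simp
  ring

theorem abs_two_mul_sq_sub_le {N r d : ℝ} (hN : 2 ≤ N) (hr : 1 < r) (hd : r - 1 ≤ d) :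
    |2 * r ^ 2 - N * (r ^ 2 - 1) * ((d ^ 2 + r ^ 2 - 1) / 2) / d ^ 2| ≤ N * r * (r + 1) := by
  have hd0 : 0 < d := by linarith
  have hsplit : N * (r ^ 2 - 1) * ((d ^ 2 + r ^ 2 - 1) / 2) / d ^ 2
      = N * (r ^ 2 - 1) / 2 + N / 2 * ((r ^ 2 - 1) ^ 2 / d ^ 2) := by
    field_simp; ring
  have hle : (r ^ 2 - 1) ^ 2 / d ^ 2 ≤ (r + 1) ^ 2 := by
    rw [div_le_iff₀ (by positivity)]
    have : (r - 1) ^ 2 ≤ d ^ 2 := pow_le_pow_left₀ (by linarith) hd 2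
    nlinarith [sq_nonneg (r + 1)]
  have hnonneg : 0 ≤ (r ^ 2 - 1) ^ 2 / d ^ 2 := by positivity
  rw [hsplit, abs_le]
  constructor <;> nlinarith

theorem abs_fderiv_kelvinPoisson_apply_self_le {N : ℕ} (hN : 2 ≤ N) {c : ℝ} (hc : 0 ≤ c)
    {x y : E} (hx : 1 < ‖x‖) (hy : ‖y‖ = 1) :
    |fderiv ℝ (kelvinPoisson N c y) x x| ≤ N * (‖x‖ / (‖x‖ - 1)) * kelvinPoisson N c y x := by
  have hxy : x ≠ y := fun h ↦ by rw [h, hy] at hx; exact lt_irrefl 1 hx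
  have hd : 0 < ‖x - y‖ := norm_pos_iff.mpr (sub_ne_zero.mpr hxy)
  have hdist : ‖x‖ - 1 ≤ ‖x - y‖ := hy ▸ norm_sub_norm_le x y
  have hinner : ⟪x - y, x⟫ = (‖x - y‖ ^ 2 + ‖x‖ ^ 2 - 1) / 2 := by
    rw [norm_sub_sq_real, hy, inner_sub_left, real_inner_self_eq_norm_sq, real_inner_comm]
    ring
  have hN' : (2 : ℝ) ≤ N := by exact_mod_cast hN
  rw [fderiv_kelvinPoisson_apply_self N c hxy, hinner, kelvinPoisson, abs_div, abs_mul,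
    abs_of_nonneg hc, abs_of_pos (pow_pos hd N)]
  calc c * |2 * ‖x‖ ^ 2 - N * (‖x‖ ^ 2 - 1) * ((‖x - y‖ ^ 2 + ‖x‖ ^ 2 - 1) / 2) / ‖x - y‖ ^ 2|
        / ‖x - y‖ ^ N
      ≤ c * (N * ‖x‖ * (‖x‖ + 1)) / ‖x - y‖ ^ N := by
        gcongr; exact abs_two_mul_sq_sub_le hN' hx hdist
    _ = N * (‖x‖ / (‖x‖ - 1)) * (c * (‖x‖ ^ 2 - 1) / ‖x - y‖ ^ N) := by
        have : ‖x‖ - 1 ≠ 0 := by linarith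
        field_simp
        ring

end

theorem stmt_6 (N : ℕ) (hN : 3 ≤ N) (c : ℝ) (hc : 0 < c)
    (y : EuclideanSpace ℝ (Fin N)) (hy : ‖y‖ = 1)
    (K : EuclideanSpace ℝ (Fin N) → ℝ)
    (hK : ∀ x : EuclideanSpace ℝ (Fin N),
      K x = (‖x‖ ^ (N - 2))⁻¹ *
        (c * (1 - ‖(‖x‖ ^ 2)⁻¹ • x‖ ^ 2) / ‖(‖x‖ ^ 2)⁻¹ • x - y‖ ^ N))
    (x : EuclideanSpace ℝ (Fin N)) (hx : 1 < ‖x‖) :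
    |fderiv ℝ K x x| ≤ N * (‖x‖ / (‖x‖ - 1)) * K x := by
  have hN2 : 2 ≤ N := by omega
  have hK_eq : ∀ z ≠ 0, K z = kelvinPoisson N c y z := fun z hz ↦
    (hK z).trans (kelvinTransform_poissonKernel_eq hN2 c hz hy)
  have hx0 : x ≠ 0 := norm_pos_iff.mp (one_pos.trans hx)
  have hK_nhds : K =ᶠ[nhds x] kelvinPoisson N c y :=
    Filter.mem_of_superset (isOpen_ne.mem_nhds hx0) hK_eq
  rw [hK_nhds.fderiv_eq, hK_eq x hx0]
  exact abs_fderiv_kelvinPoisson_apply_self_le hN2 hc.le hx hy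
end

section
/- Let 0 ≤ a < 1, 0 ≤ b < 1 with a + b < 1, let γ ≥ 0, T > 0 and δ > 0. Then there exists L* ≥ 1 such that for all L ≥ L*, sup_{0<t<T} e^{−Lt} t^γ ∫_0^t e^{Ls} s^{−a} (t−s)^{−b} ds ≤ δ. -/
/-!
Writing `e^{-Lt} e^{Ls} = e^{-L(t-s)}` and using `e^{-x} ≤ x^{-ε}` for `x > 0`, `0 ≤ ε ≤ 1`,
the quantity is at most `L^{-ε} t^γ ∫_0^t s^{-a} (t-s)^{-(b+ε)} ds`. With `ε = (1 - a - b)/2`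
the exponent `b + ε` is still below `1`, and splitting at `t/2` bounds the Beta-type integral by
a constant times `t^{1-a-b-ε} = t^ε`. Hence the quantity is `O(L^{-ε})` uniformly in `t ∈ (0, T)`.
-/

open MeasureTheory Set Filter intervalIntegral Real

lemma exp_neg_le_rpow_neg {ε x : ℝ} (hε0 : 0 ≤ ε) (hε1 : ε ≤ 1) (hx : 0 < x) :
    exp (-x) ≤ x ^ (-ε) := by
  rw [exp_neg, rpow_neg hx.le]
  refine inv_anti₀ (rpow_pos_of_pos hx ε) ?_
  rcases le_total x 1 with h | h
  · calc x ^ ε ≤ 1 := rpow_le_one hx.le h hε0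
      _ ≤ exp x := one_le_exp hx.le
  · calc x ^ ε ≤ x ^ (1 : ℝ) := rpow_le_rpow_of_exponent_le h hε1
      _ = x := rpow_one x
      _ ≤ exp x := by linarith [add_one_le_exp x]

section BetaIntegral

variable {a c t : ℝ}

lemma intervalIntegrable_rpow_mul_sub_rpow_half (ha : a < 1) (ht : 0 < t) :
    IntervalIntegrable (fun s => s ^ (-a) * (t - s) ^ (-c)) volume 0 (t / 2) := by
  refine (intervalIntegrable_rpow' (by linarith)).mul_continuousOn
    ((continuousOn_const.sub continuousOn_id).rpow_const fun s hs => Or.inl ?_)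
  rw [uIcc_of_le (by positivity)] at hs
  show t - s ≠ 0
  linarith [hs.2]

lemma integral_rpow_mul_sub_rpow_half_le (ha : a < 1) (hc : 0 ≤ c) (ht : 0 < t) :
    ∫ s in 0..t / 2, s ^ (-a) * (t - s) ^ (-c) ≤ (t / 2) ^ (1 - a - c) / (1 - a) := by
  have ht2 : 0 < t / 2 := by positivity
  calc ∫ s in 0..t / 2, s ^ (-a) * (t - s) ^ (-c)
      ≤ ∫ s in 0..t / 2, s ^ (-a) * (t / 2) ^ (-c) := by
        refine integral_mono_on ht2.le (intervalIntegrable_rpow_mul_sub_rpow_half ha ht)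
          ((intervalIntegrable_rpow' (by linarith)).mul_const _) fun s hs => ?_
        exact mul_le_mul_of_nonneg_left
          (rpow_le_rpow_of_nonpos ht2 (by linarith [hs.2]) (by linarith)) (rpow_nonneg hs.1 _)
    _ = (t / 2) ^ (1 - a - c) / (1 - a) := by
        rw [intervalIntegral.integral_mul_const, integral_rpow (Or.inl (by linarith)),
          zero_rpow (by linarith), show 1 - a - c = -a + 1 + -c by ring, rpow_add ht2 (-a + 1)]
        ring

lemma integral_rpow_mul_sub_rpow_upper_half :
    ∫ s in t / 2..t, s ^ (-a) * (t - s) ^ (-c) = ∫ s in 0..t / 2, s ^ (-c) * (t - s) ^ (-a) := by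
  have := integral_comp_sub_left (fun s => s ^ (-a) * (t - s) ^ (-c)) (a := 0) (b := t / 2) t
  simp only [sub_sub_cancel, sub_zero, sub_half] at this
  rw [← this]
  simp only [mul_comm]

lemma intervalIntegrable_rpow_mul_sub_rpow (ha : a < 1) (hc : c < 1) (ht : 0 < t) :
    IntervalIntegrable (fun s => s ^ (-a) * (t - s) ^ (-c)) volume 0 t := by
  refine (intervalIntegrable_rpow_mul_sub_rpow_half ha ht).trans ?_
  have := ((intervalIntegrable_rpow_mul_sub_rpow_half (c := a) hc ht).comp_sub_left t).symm
  simp only [sub_sub_cancel, sub_zero, sub_half, mul_comm] at this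
  exact this

lemma integral_rpow_mul_sub_rpow_le (ha0 : 0 ≤ a) (ha1 : a < 1) (hc0 : 0 ≤ c) (hc1 : c < 1)
    (ht : 0 < t) :
    ∫ s in 0..t, s ^ (-a) * (t - s) ^ (-c) ≤ (t / 2) ^ (1 - a - c) * ((1 - a)⁻¹ + (1 - c)⁻¹) := by
  have hupper := intervalIntegrable_rpow_mul_sub_rpow ha1 hc1 ht |>.mono_set <| by
    rw [uIcc_of_le (by linarith : t / 2 ≤ t), uIcc_of_le ht.le]
    exact Icc_subset_Icc_left (by positivity)
  rw [← integral_add_adjacent_intervals (intervalIntegrable_rpow_mul_sub_rpow_half ha1 ht) hupper,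
    integral_rpow_mul_sub_rpow_upper_half]
  have hlower := integral_rpow_mul_sub_rpow_half_le ha1 hc0 ht
  have hreflected := integral_rpow_mul_sub_rpow_half_le hc1 ha0 ht
  rw [show 1 - c - a = 1 - a - c by ring] at hreflected
  calc _ ≤ (t / 2) ^ (1 - a - c) / (1 - a) + (t / 2) ^ (1 - a - c) / (1 - c) :=
        add_le_add hlower hreflected
    _ = _ := by ring

end BetaIntegral

lemma exp_neg_mul_setIntegral_exp_mul_le {a b ε L t : ℝ} (hε0 : 0 ≤ ε) (hε1 : ε ≤ 1) (hL : 0 < L)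
    (hint : IntegrableOn (fun s => s ^ (-a) * (t - s) ^ (-(b + ε))) (Ioo 0 t)) :
    exp (-L * t) * ∫ s in Ioo 0 t, exp (L * s) * s ^ (-a) * (t - s) ^ (-b)
      ≤ L ^ (-ε) * ∫ s in Ioo 0 t, s ^ (-a) * (t - s) ^ (-(b + ε)) := by
  rw [← MeasureTheory.integral_const_mul, ← MeasureTheory.integral_const_mul]
  refine integral_mono_of_nonneg ?_ (hint.const_mul _) ?_
  · filter_upwards [ae_restrict_mem measurableSet_Ioo] with s hs
    have : 0 < t - s := sub_pos.2 hs.2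
    have : 0 < s := hs.1
    positivity
  · filter_upwards [ae_restrict_mem measurableSet_Ioo] with s hs
    have hts : 0 < t - s := sub_pos.2 hs.2
    have hexp : exp (-(L * (t - s))) ≤ L ^ (-ε) * (t - s) ^ (-ε) := by
      rw [← mul_rpow hL.le hts.le]
      exact exp_neg_le_rpow_neg hε0 hε1 (by positivity)
    calc exp (-L * t) * (exp (L * s) * s ^ (-a) * (t - s) ^ (-b))
        = exp (-(L * (t - s))) * (s ^ (-a) * (t - s) ^ (-b)) := by
          rw [mul_assoc, ← mul_assoc, ← exp_add]
          ring_nf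
      _ ≤ L ^ (-ε) * (t - s) ^ (-ε) * (s ^ (-a) * (t - s) ^ (-b)) := by
          gcongr
          exact mul_nonneg (rpow_nonneg hs.1.le _) (rpow_nonneg hts.le _)
      _ = L ^ (-ε) * (s ^ (-a) * (t - s) ^ (-(b + ε))) := by
          rw [neg_add, rpow_add hts]
          ring

lemma exists_one_le_forall_mul_rpow_neg_le (C : ℝ) {ε δ : ℝ} (hε : 0 < ε) (hδ : 0 < δ) :
    ∃ L₀ : ℝ, 1 ≤ L₀ ∧ ∀ L, L₀ ≤ L → C * L ^ (-ε) ≤ δ := by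
  have hlim : Tendsto (fun L : ℝ => C * L ^ (-ε)) atTop (nhds 0) := by
    simpa using (tendsto_rpow_neg_atTop hε).const_mul C
  obtain ⟨L₀, hL₀⟩ := eventually_atTop.1 (hlim.eventually_le_const hδ)
  exact ⟨max 1 L₀, le_max_left _ _, fun L hL => hL₀ L (le_of_max_le_right hL)⟩

theorem stmt_10_general (a b γ T δ : ℝ) (ha0 : 0 ≤ a) (ha1 : a < 1) (hb0 : 0 ≤ b)
    (hab : a + b < 1) (hγ : 0 ≤ γ) (hT : 0 < T) (hδ : 0 < δ) :
    ∃ Lstar : ℝ, 1 ≤ Lstar ∧ ∀ L : ℝ, Lstar ≤ L → ∀ t ∈ Set.Ioo (0 : ℝ) T,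
      Real.exp (-L * t) * t ^ γ *
          ∫ s in Set.Ioo (0 : ℝ) t, Real.exp (L * s) * s ^ (-a) * (t - s) ^ (-b) ≤ δ := by
  set ε := (1 - a - b) / 2 with hε
  have hε0 : 0 < ε := by linarith
  have hbε1 : b + ε < 1 := by linarith
  have hbε : 1 - a - (b + ε) = ε := by linarith
  set K := (1 - a)⁻¹ + (1 - (b + ε))⁻¹
  obtain ⟨L₀, hL₀, hdecay⟩ := exists_one_le_forall_mul_rpow_neg_le (T ^ γ * (T / 2) ^ ε * K) hε0 hδ
  refine ⟨L₀, hL₀, fun L hL t ⟨ht0, htT⟩ => ?_⟩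
  have hL0 : 0 < L := by linarith
  have hbeta := integral_rpow_mul_sub_rpow_le ha0 ha1 (by linarith) hbε1 ht0
  rw [integral_of_le ht0.le, integral_Ioc_eq_integral_Ioo, hbε] at hbeta
  have hint := (intervalIntegrable_iff_integrableOn_Ioo_of_le ht0.le).1
    (intervalIntegrable_rpow_mul_sub_rpow ha1 hbε1 ht0)
  calc exp (-L * t) * t ^ γ * ∫ s in Ioo 0 t, exp (L * s) * s ^ (-a) * (t - s) ^ (-b)
      = t ^ γ * (exp (-L * t) * ∫ s in Ioo 0 t, exp (L * s) * s ^ (-a) * (t - s) ^ (-b)) := by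
        ring
    _ ≤ t ^ γ * (L ^ (-ε) * ((t / 2) ^ ε * K)) := by
        refine mul_le_mul_of_nonneg_left ?_ (by positivity)
        exact (exp_neg_mul_setIntegral_exp_mul_le hε0.le (by linarith) hL0 hint).trans
          (mul_le_mul_of_nonneg_left hbeta (by positivity))
    _ ≤ T ^ γ * (L ^ (-ε) * ((T / 2) ^ ε * K)) := by gcongr
    _ = T ^ γ * (T / 2) ^ ε * K * L ^ (-ε) := by ring
    _ ≤ δ := hdecay L hL

theorem stmt_10 (a b γ T δ : ℝ) (ha0 : 0 ≤ a) (ha1 : a < 1) (hb0 : 0 ≤ b) (hb1 : b < 1)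
    (hab : a + b < 1) (hγ : 0 ≤ γ) (hT : 0 < T) (hδ : 0 < δ) :
    ∃ Lstar : ℝ, 1 ≤ Lstar ∧ ∀ L : ℝ, Lstar ≤ L → ∀ t ∈ Set.Ioo (0 : ℝ) T,
      Real.exp (-L * t) * t ^ γ *
          ∫ s in Set.Ioo (0 : ℝ) t, Real.exp (L * s) * s ^ (-a) * (t - s) ^ (-b) ≤ δ :=
  stmt_10_general a b γ T δ ha0 ha1 hb0 hab hγ hT hδ
end

section
/- Let 0 < μ < 1, 0 ≤ a < 1, 0 ≤ b < 1 and L > 0. Then for every t > 0, ∫_0^t e^{Ls} s^{−a} (t−s)^{−b} ds ≤ (1/(1−a)) (1−μ)^{−b} μ^{1−a} t^{1−a−b} e^{Lt} + μ^{−a−b} t^{−a−b} (e^{Lt} − 1)/L + (1/(1−b)) (1−μ)^{−a} μ^{1−b} t^{1−a−b} e^{Lt}. -/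
/-!
Write the integrand as `e^{Ls}` times the kernel `s^{-a} (t - s)^{-b}`. On `(0, μt)` bound
`e^{Ls} ≤ e^{Lt}` and `(t - s)^{-b} ≤ ((1 - μ)t)^{-b}`, and integrate `s^{-a}` exactly; the
piece `((1 - μ)t, t)` is the same estimate after the reflection `s ↦ t - s`, which swaps `a`
and `b`. On `(μt, (1 - μ)t)` both singular factors are at most `(μt)^{-a-b}`, and `e^{Ls}`
integrates to at most `(e^{Lt} - 1)/L`. For `μ > 1/2` the pieces overlap, but the split still
holds for oriented integrals, and the middle one is then nonpositive.
-/

open MeasureTheory Real Set intervalIntegral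

lemma integral_mul_le_mul_integral {w k : ℝ → ℝ} {c d W : ℝ} (hcd : c ≤ d)
    (hw : ContinuousOn w (Icc c d)) (hk : IntervalIntegrable k volume c d)
    (hk0 : ∀ s ∈ Icc c d, 0 ≤ k s) (hwW : ∀ s ∈ Icc c d, w s ≤ W) :
    ∫ s in c..d, w s * k s ≤ W * ∫ s in c..d, k s := by
  rw [← intervalIntegral.integral_const_mul]
  refine integral_mono_on hcd (hk.continuousOn_mul (by rwa [uIcc_of_le hcd])) (hk.const_mul W) ?_
  exact fun s hs => mul_le_mul_of_nonneg_right (hwW s hs) (hk0 s hs)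

lemma integral_exp_mul (L c d : ℝ) (hL : L ≠ 0) :
    ∫ s in c..d, exp (L * s) = (exp (L * d) - exp (L * c)) / L := by
  rw [integral_comp_mul_left (fun u => exp u) hL, integral_exp, smul_eq_mul]
  field_simp

lemma mul_rpow_mul_mul_rpow {x y t p q : ℝ} (hx : 0 ≤ x) (hy : 0 ≤ y) (ht : 0 < t) :
    (x * t) ^ p * (y * t) ^ q = x ^ p * y ^ q * t ^ (p + q) := by
  rw [mul_rpow hx ht.le, mul_rpow hy ht.le, rpow_add ht]
  ring

section Kernel

variable {a b t m c L : ℝ}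

lemma rpow_neg_mul_sub_rpow_neg_nonneg {s : ℝ} (hs : s ∈ Icc 0 t) :
    0 ≤ s ^ (-a) * (t - s) ^ (-b) :=
  mul_nonneg (rpow_nonneg hs.1 _) (rpow_nonneg (sub_nonneg.2 hs.2) _)

lemma intervalIntegrable_rpow_neg_mul_sub_rpow_neg_of_lt (ha : a < 1) (hm : 0 ≤ m) (hmt : m < t) :
    IntervalIntegrable (fun s => s ^ (-a) * (t - s) ^ (-b)) volume 0 m := by
  refine (intervalIntegral.intervalIntegrable_rpow' (by linarith)).mul_continuousOn ?_
  refine (continuousOn_const.sub continuousOn_id).rpow_const fun s hs => Or.inl ?_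
  rw [uIcc_of_le hm] at hs
  exact (sub_pos.2 (hs.2.trans_lt hmt)).ne'

lemma intervalIntegrable_rpow_neg_mul_sub_rpow_neg_sub_of_lt (hb : b < 1) (hm : 0 ≤ m)
    (hmt : m < t) :
    IntervalIntegrable (fun s => s ^ (-a) * (t - s) ^ (-b)) volume (t - m) t := by
  have h := intervalIntegrable_rpow_neg_mul_sub_rpow_neg_of_lt (b := a) hb hm hmt
  simpa only [sub_sub_cancel, sub_zero, mul_comm] using (h.comp_sub_left t).symm

lemma intervalIntegrable_rpow_neg_mul_sub_rpow_neg (ha : a < 1) (hb : b < 1) (ht : 0 < t) :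
    IntervalIntegrable (fun s => s ^ (-a) * (t - s) ^ (-b)) volume 0 t := by
  have hhalf : t / 2 < t := half_lt_self ht
  have h := intervalIntegrable_rpow_neg_mul_sub_rpow_neg_sub_of_lt (a := a) hb (by positivity) hhalf
  rw [sub_half] at h
  exact (intervalIntegrable_rpow_neg_mul_sub_rpow_neg_of_lt ha (by positivity) hhalf).trans h

lemma integral_rpow_neg_mul_sub_rpow_neg_reflect :
    ∫ s in (t - m)..t, s ^ (-a) * (t - s) ^ (-b) = ∫ s in 0..m, s ^ (-b) * (t - s) ^ (-a) := by
  have := integral_comp_sub_left (fun s => s ^ (-a) * (t - s) ^ (-b)) t (a := 0) (b := m)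
  simp only [sub_sub_cancel, sub_zero] at this
  rw [← this]
  simp only [mul_comm]

lemma integral_rpow_neg_mul_sub_rpow_neg_le (ha : a < 1) (hb : 0 ≤ b) (hm : 0 ≤ m)
    (hmt : m < t) :
    ∫ s in 0..m, s ^ (-a) * (t - s) ^ (-b) ≤ (t - m) ^ (-b) * m ^ (1 - a) / (1 - a) := by
  have hcont : ContinuousOn (fun s => (t - s) ^ (-b)) (Icc 0 m) :=
    (continuousOn_const.sub continuousOn_id).rpow_const fun s hs =>
      Or.inl (sub_pos.2 (hs.2.trans_lt hmt)).ne'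
  have hbound := integral_mul_le_mul_integral (k := fun s => s ^ (-a)) (W := (t - m) ^ (-b))
    hm hcont (intervalIntegral.intervalIntegrable_rpow' (by linarith))
    (fun s hs => rpow_nonneg hs.1 _)
    fun s hs => rpow_le_rpow_of_nonpos (by linarith) (by linarith [hs.2]) (by linarith)
  simp only [mul_comm ((t - _) ^ (-b))] at hbound
  rw [integral_rpow (Or.inl (by linarith)), zero_rpow (by linarith), sub_zero, neg_add_eq_sub]
    at hbound
  exact hbound.trans_eq (by ring)

lemma rpow_neg_mul_sub_rpow_neg_le {s : ℝ} (ha : 0 ≤ a) (hb : 0 ≤ b) (hc : 0 < c)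
    (hs : s ∈ Icc c (t - c)) : s ^ (-a) * (t - s) ^ (-b) ≤ c ^ (-a - b) := by
  rw [sub_eq_add_neg (-a), rpow_add hc]
  exact mul_le_mul (rpow_le_rpow_of_nonpos hc hs.1 (by linarith))
    (rpow_le_rpow_of_nonpos hc (by linarith [hs.2]) (by linarith))
    (rpow_nonneg (by linarith [hs.2]) _) (rpow_nonneg hc.le _)

lemma integral_exp_mul_rpow_neg_mul_sub_rpow_neg_le (hL : 0 ≤ L) (ha : a < 1) (hb : 0 ≤ b)
    (hm : 0 ≤ m) (hmt : m < t) :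
    ∫ s in 0..m, exp (L * s) * s ^ (-a) * (t - s) ^ (-b)
      ≤ exp (L * t) * ((t - m) ^ (-b) * m ^ (1 - a) / (1 - a)) := by
  have hle := integral_mul_le_mul_integral (w := fun s => exp (L * s)) hm (by fun_prop)
    (intervalIntegrable_rpow_neg_mul_sub_rpow_neg_of_lt (b := b) ha hm hmt)
    (fun s hs => rpow_neg_mul_sub_rpow_neg_nonneg ⟨hs.1, hs.2.trans hmt.le⟩)
    fun s hs => exp_le_exp.2 (mul_le_mul_of_nonneg_left (hs.2.trans hmt.le) hL)
  simp only [← mul_assoc] at hle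
  exact hle.trans (mul_le_mul_of_nonneg_left (integral_rpow_neg_mul_sub_rpow_neg_le ha hb hm hmt)
    (exp_pos _).le)

lemma integral_exp_mul_rpow_neg_mul_sub_rpow_neg_sub_le (hL : 0 ≤ L) (hb : b < 1) (ha : 0 ≤ a)
    (hm : 0 ≤ m) (hmt : m < t) :
    ∫ s in (t - m)..t, exp (L * s) * s ^ (-a) * (t - s) ^ (-b)
      ≤ exp (L * t) * ((t - m) ^ (-a) * m ^ (1 - b) / (1 - b)) := by
  have hle := integral_mul_le_mul_integral (w := fun s => exp (L * s)) (by linarith) (by fun_prop)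
    (intervalIntegrable_rpow_neg_mul_sub_rpow_neg_sub_of_lt (a := a) hb hm hmt)
    (fun s hs => rpow_neg_mul_sub_rpow_neg_nonneg ⟨by linarith [hs.1], hs.2⟩)
    fun s hs => exp_le_exp.2 (mul_le_mul_of_nonneg_left hs.2 hL)
  simp only [← mul_assoc, integral_rpow_neg_mul_sub_rpow_neg_reflect] at hle
  exact hle.trans (mul_le_mul_of_nonneg_left (integral_rpow_neg_mul_sub_rpow_neg_le hb ha hm hmt)
    (exp_pos _).le)

lemma integral_exp_mul_rpow_neg_mul_sub_rpow_neg_middle_le (hL : 0 < L) (ha : 0 ≤ a)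
    (hb : 0 ≤ b) (hc : 0 < c) (hct : c < t) :
    ∫ s in c..(t - c), exp (L * s) * s ^ (-a) * (t - s) ^ (-b)
      ≤ c ^ (-a - b) * ((exp (L * t) - 1) / L) := by
  have hexp : 0 ≤ (exp (L * t) - 1) / L :=
    div_nonneg (sub_nonneg.2 (one_le_exp (mul_pos hL (hc.trans hct)).le)) hL.le
  have hexp_int (u v : ℝ) : IntervalIntegrable (fun s => exp (L * s)) volume u v :=
    (by fun_prop : Continuous fun s => exp (L * s)).intervalIntegrable u v
  rcases le_or_gt c (t - c) with hle | hlt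
  · have hkernel : ContinuousOn (fun s => s ^ (-a) * (t - s) ^ (-b)) (Icc c (t - c)) :=
      (continuousOn_id.rpow_const fun s hs => Or.inl (hc.trans_le hs.1).ne').mul
        ((continuousOn_const.sub continuousOn_id).rpow_const fun s hs =>
          Or.inl (sub_pos.2 (by linarith [hs.2] : s < t)).ne')
    have hbound := integral_mul_le_mul_integral (k := fun s => exp (L * s)) hle hkernel
        (hexp_int _ _) (fun _ _ => (exp_pos _).le)
      fun s hs => rpow_neg_mul_sub_rpow_neg_le ha hb hc hs
    have hmono : ∫ s in c..(t - c), exp (L * s) ≤ ∫ s in 0..t, exp (L * s) :=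
      integral_mono_interval hc.le hle (by linarith) (ae_of_all _ fun _ => (exp_pos _).le)
        (hexp_int _ _)
    rw [integral_exp_mul L 0 t hL.ne', mul_zero, exp_zero] at hmono
    calc ∫ s in c..(t - c), exp (L * s) * s ^ (-a) * (t - s) ^ (-b)
        = ∫ s in c..(t - c), s ^ (-a) * (t - s) ^ (-b) * exp (L * s) := by
          congr 1; ext s; ring
      _ ≤ c ^ (-a - b) * ((exp (L * t) - 1) / L) :=
          hbound.trans (mul_le_mul_of_nonneg_left hmono (rpow_nonneg hc.le _))
  · have hnonneg : 0 ≤ ∫ s in (t - c)..c, exp (L * s) * s ^ (-a) * (t - s) ^ (-b) :=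
      integral_nonneg hlt.le fun s hs => by
        rw [mul_assoc]
        exact mul_nonneg (exp_pos _).le
          (rpow_neg_mul_sub_rpow_neg_nonneg ⟨by linarith [hs.1], by linarith [hs.2]⟩)
    rw [integral_symm]
    linarith [mul_nonneg (rpow_nonneg hc.le (-a - b)) hexp]

end Kernel

theorem stmt_12 (μ a b L : ℝ) (hμ0 : 0 < μ) (hμ1 : μ < 1) (ha0 : 0 ≤ a) (ha1 : a < 1)
    (hb0 : 0 ≤ b) (hb1 : b < 1) (hL : 0 < L) (t : ℝ) (ht : 0 < t) :
    ∫ s in Set.Ioo (0 : ℝ) t, Real.exp (L * s) * s ^ (-a) * (t - s) ^ (-b)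
      ≤ (1 / (1 - a)) * (1 - μ) ^ (-b) * μ ^ (1 - a) * t ^ (1 - a - b) * Real.exp (L * t)
        + μ ^ (-a - b) * t ^ (-a - b) * (Real.exp (L * t) - 1) / L
        + (1 / (1 - b)) * (1 - μ) ^ (-a) * μ ^ (1 - b) * t ^ (1 - a - b) * Real.exp (L * t) := by
  have hμt : 0 < μ * t := mul_pos hμ0 ht
  have hμt_lt : μ * t < t := mul_lt_of_lt_one_left ht hμ1
  have hint : IntervalIntegrable (fun s => exp (L * s) * s ^ (-a) * (t - s) ^ (-b)) volume 0 t := by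
    simpa only [mul_assoc] using (intervalIntegrable_rpow_neg_mul_sub_rpow_neg ha1 hb1 ht
      ).continuousOn_mul (g := fun s => exp (L * s)) (by fun_prop)
  have hint_of_mem : ∀ c ∈ Icc 0 t, ∀ d ∈ Icc 0 t,
      IntervalIntegrable (fun s => exp (L * s) * s ^ (-a) * (t - s) ^ (-b)) volume c d :=
    fun c hc d hd => hint.mono_set (by rw [uIcc_of_le ht.le]; exact uIcc_subset_Icc hc hd)
  have h0 : (0 : ℝ) ∈ Icc 0 t := ⟨le_rfl, ht.le⟩
  have hm : μ * t ∈ Icc 0 t := ⟨hμt.le, hμt_lt.le⟩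
  have hm' : t - μ * t ∈ Icc 0 t := ⟨by linarith, by linarith⟩
  have ht' : t ∈ Icc 0 t := ⟨ht.le, le_rfl⟩
  rw [← integral_Ioc_eq_integral_Ioo, ← integral_of_le ht.le,
    ← integral_add_adjacent_intervals (hint_of_mem _ h0 _ hm') (hint_of_mem _ hm' _ ht'),
    ← integral_add_adjacent_intervals (hint_of_mem _ h0 _ hm) (hint_of_mem _ hm _ hm')]
  refine (add_le_add (add_le_add
    (integral_exp_mul_rpow_neg_mul_sub_rpow_neg_le hL.le ha1 hb0 hμt.le hμt_lt)
    (integral_exp_mul_rpow_neg_mul_sub_rpow_neg_middle_le hL ha0 hb0 hμt hμt_lt))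
    (integral_exp_mul_rpow_neg_mul_sub_rpow_neg_sub_le hL.le hb1 ha0 hμt.le hμt_lt)).trans_eq ?_
  rw [show t - μ * t = (1 - μ) * t by ring, mul_rpow_mul_mul_rpow (by linarith) hμ0.le ht,
    mul_rpow_mul_mul_rpow (by linarith) hμ0.le ht, mul_rpow hμ0.le ht.le]
  ring_nf
end
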